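/- If a polynomial f is a sum of squares, f = Σⱼ gⱼ², then for each j the Newton polytope of gⱼ is contained in half of the Newton polytope of f: C(gⱼ) ⊆ (1/2)·C(f). -/

import Mathlib

open Pointwise

noncomputable def newtonPolytope {n : ℕ} (p : MvPolynomial (Fin n) ℝ) : Set (Fin n → ℝ) :=
  convexHull ℝ ((fun (α : (Fin n) →₀ ℕ) (i : Fin n) => (α i : ℝ)) '' ↑p.support)

/-!
Let `T` be the union of the supports of the `gⱼ`. If `ν` is a vertex of `conv T`, then `2ν`
can be written as `β + γ` with `β, γ ∈ T` only as `ν + ν`, so the coefficient of `x^{2ν}` in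
`Σ gⱼ²` is `Σ coeff_ν(gⱼ)² > 0`. Hence every vertex of `conv T` lies in `½ C(f)`, and by
Krein–Milman so does `conv T ⊇ C(gⱼ)`.
-/

open Set MvPolynomial Finset.HasAntidiagonal

theorem IsCompact.subset_of_extremePoints_subset {E : Type*} [AddCommGroup E] [Module ℝ E]
    [TopologicalSpace E] [T2Space E] [IsTopologicalAddGroup E] [ContinuousSMul ℝ E]
    [LocallyConvexSpace ℝ E] {s t : Set E} (hs : IsCompact s) (hs_conv : Convex ℝ s)
    (ht_conv : Convex ℝ t) (ht_closed : IsClosed t) (h : s.extremePoints ℝ ⊆ t) : s ⊆ t := by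
  rw [← closure_convexHull_extremePoints hs hs_conv]
  exact closure_minimal (convexHull_min h ht_conv) ht_closed

theorem eq_and_eq_of_add_eq_add_self_of_mem_extremePoints {𝕜 E : Type*} [Field 𝕜] [LinearOrder 𝕜]
    [IsStrictOrderedRing 𝕜] [AddCommGroup E] [Module 𝕜 E] {A : Set E} {x y z : E}
    (hx : x ∈ A.extremePoints 𝕜) (hy : y ∈ A) (hz : z ∈ A) (h : y + z = x + x) :
    y = x ∧ z = x := by
  refine (mem_extremePoints.1 hx).2 y hy z hz
    ⟨1 / 2, 1 / 2, by norm_num, by norm_num, by norm_num, ?_⟩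
  rw [← smul_add, h, ← two_smul 𝕜 x, smul_smul]
  norm_num

section Exponents

variable {σ : Type*}

def exponentVector (α : σ →₀ ℕ) : σ → ℝ := fun i => α i

theorem exponentVector_injective : Function.Injective (exponentVector (σ := σ)) :=
  fun _ _ h => Finsupp.ext fun i => by simpa [exponentVector] using congrFun h i

theorem exponentVector_add (α β : σ →₀ ℕ) :
    exponentVector (α + β) = exponentVector α + exponentVector β := by
  ext i
  simp [exponentVector]

theorem coeff_add_self_mul_of_mem_extremePoints {R : Type*} [CommSemiring R]
    {s : Set (σ →₀ ℕ)} {p q : MvPolynomial σ R} (hp : ↑p.support ⊆ s) (hq : ↑q.support ⊆ s)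
    {ν : σ →₀ ℕ} (hν : exponentVector ν ∈ (exponentVector '' s).extremePoints ℝ) :
    coeff (ν + ν) (p * q) = coeff ν p * coeff ν q := by
  classical
  rw [coeff_mul, Finset.sum_eq_single_of_mem (ν, ν) (mem_antidiagonal.2 rfl)]
  rintro ⟨β, γ⟩ hβγ hne
  by_contra hc
  have hβ : β ∈ s := hp (mem_support_iff.2 (left_ne_zero_of_mul hc))
  have hγ : γ ∈ s := hq (mem_support_iff.2 (right_ne_zero_of_mul hc))
  have hsum : exponentVector β + exponentVector γ = exponentVector ν + exponentVector ν := by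
    rw [← exponentVector_add, ← exponentVector_add, mem_antidiagonal.1 hβγ]
  obtain ⟨hβν, hγν⟩ := eq_and_eq_of_add_eq_add_self_of_mem_extremePoints hν
    (mem_image_of_mem _ hβ) (mem_image_of_mem _ hγ) hsum
  exact hne (Prod.ext (exponentVector_injective hβν) (exponentVector_injective hγν))

theorem add_self_mem_support_sum_sq_of_mem_extremePoints {R ι : Type*} [CommRing R]
    [LinearOrder R] [IsStrictOrderedRing R] [Fintype ι] {g : ι → MvPolynomial σ R}
    {ν : σ →₀ ℕ}
    (hν : exponentVector ν ∈ (exponentVector '' ⋃ i, ↑(g i).support).extremePoints ℝ) :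
    ν + ν ∈ (∑ i, g i ^ 2).support := by
  obtain ⟨j, hj⟩ :=
    mem_iUnion.1 <| exponentVector_injective.mem_set_image.1 (extremePoints_subset hν)
  have hcoeff (i : ι) : coeff (ν + ν) (g i ^ 2) = coeff ν (g i) ^ 2 := by
    have hsupp := subset_iUnion (fun i => ((g i).support : Set (σ →₀ ℕ))) i
    rw [sq, sq, coeff_add_self_mul_of_mem_extremePoints hsupp hsupp hν]
  rw [mem_support_iff, coeff_sum, Finset.sum_congr rfl fun i _ => hcoeff i]
  refine (Finset.sum_pos' (fun i _ => sq_nonneg _) ⟨j, Finset.mem_univ _, ?_⟩).ne'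
  have hj' : coeff ν (g j) ≠ 0 := mem_support_iff.1 hj
  positivity

end Exponents

theorem isCompact_newtonPolytope {n : ℕ} (p : MvPolynomial (Fin n) ℝ) :
    IsCompact (newtonPolytope p) :=
  (p.support.finite_toSet.image _).isCompact_convexHull ℝ

theorem convexHull_iUnion_support_subset_half_newtonPolytope_sum_sq {n : ℕ} {ι : Type*}
    [Fintype ι] (g : ι → MvPolynomial (Fin n) ℝ) :
    convexHull ℝ (exponentVector '' ⋃ i, ↑(g i).support) ⊆
      (1 / 2 : ℝ) • newtonPolytope (∑ i, g i ^ 2) := by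
  set T := exponentVector '' ⋃ i, ((g i).support : Set (Fin n →₀ ℕ))
  have hT : T.Finite := (finite_iUnion fun i => (g i).support.finite_toSet).image _
  refine (hT.isCompact_convexHull ℝ).subset_of_extremePoints_subset (convex_convexHull ℝ T)
    ((convex_convexHull ℝ _).smul _) ((isCompact_newtonPolytope _).smul _).isClosed ?_
  intro x hx
  have hxT : x ∈ T.extremePoints ℝ :=
    inter_extremePoints_subset_extremePoints_of_subset (subset_convexHull ℝ T)
      ⟨extremePoints_convexHull_subset hx, hx⟩
  obtain ⟨ν, -, rfl⟩ := extremePoints_subset hxT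
  refine ⟨exponentVector (ν + ν), subset_convexHull ℝ _
    (mem_image_of_mem _ (add_self_mem_support_sum_sq_of_mem_extremePoints hxT)), ?_⟩
  simp only [exponentVector_add, ← two_smul ℝ, smul_smul]
  norm_num

theorem newton_polytope_sos (n k : ℕ) (f : MvPolynomial (Fin n) ℝ)
    (g : Fin k → MvPolynomial (Fin n) ℝ) (hf : f = ∑ j, (g j) ^ 2) :
    ∀ j, newtonPolytope (g j) ⊆ ((1 / 2 : ℝ) • newtonPolytope f : Set (Fin n → ℝ)) := by
  intro j
  subst hf
  exact (convexHull_mono (image_mono (subset_iUnion_of_subset j subset_rfl))).trans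
    (convexHull_iUnion_support_subset_half_newtonPolytope_sum_sq g)
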